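/- arXiv:1809.01282 — 2 statements merged into one kernel-verified Lean document; each statement's English description precedes it below -/
import Mathlib

section
/- The poset Ex(𝒜) of exact structures on an additive category 𝒜, ordered by containment, is a complete bounded lattice, with meet given by intersection, bottom element the split exact structure ℰ_min, and top element the maximal exact structure ℰ_max. -/
/-!
A conflation of one exact structure whose inflation is admissible in another already lies in
the other, cokernels being unique up to isomorphism. Hence the admissible morphisms of the
intersection of a nonempty family of exact structures are those admissible in every member, the
axioms pass to the intersection, and taking infima as intersections inside `Emax` gives a complete
lattice. The split sequences form an exact structure contained in every exact structure `E`: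
`A ⟶ 0` is the cokernel of the admissible inflation `𝟙 A`, so its pullback along `B ⟶ 0`, the
projection `A ⊞ B ⟶ B`, is an admissible deflation with kernel `A ⟶ A ⊞ B`.
-/

open CategoryTheory CategoryTheory.Limits

universe v u

variable {C : Type u} [Category.{v} C] [Preadditive C]

/-- A kernel-cokernel pair: `S.f` is a kernel of `S.g` and `S.g` is a cokernel of `S.f`. -/
structure IsKernelCokernelPair (S : ShortComplex C) : Prop where
  isKernel : Nonempty (IsLimit (KernelFork.ofι S.f S.zero))
  isCokernel : Nonempty (IsColimit (CokernelCofork.ofπ S.g S.zero))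

/-- `i` is an admissible monic for the class `E`. -/
def AdmissibleMono (E : Set (ShortComplex C)) {A B : C} (i : A ⟶ B) : Prop :=
  ∃ (Z : C) (d : B ⟶ Z) (w : i ≫ d = 0), ShortComplex.mk i d w ∈ E

/-- `d` is an admissible epic for the class `E`. -/
def AdmissibleEpi (E : Set (ShortComplex C)) {B Z : C} (d : B ⟶ Z) : Prop :=
  ∃ (A : C) (i : A ⟶ B) (w : i ≫ d = 0), ShortComplex.mk i d w ∈ E

/-- Quillen's axioms for an exact structure on an additive category. -/
structure IsExactStructure (E : Set (ShortComplex C)) : Prop where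
  kcp : ∀ S ∈ E, IsKernelCokernelPair S
  iso_closed : ∀ S T : ShortComplex C, S ∈ E → Nonempty (S ≅ T) → T ∈ E
  id_mono : ∀ A : C, AdmissibleMono E (𝟙 A)
  id_epi : ∀ A : C, AdmissibleEpi E (𝟙 A)
  mono_comp : ∀ {A B D : C} (i : A ⟶ B) (j : B ⟶ D),
    AdmissibleMono E i → AdmissibleMono E j → AdmissibleMono E (i ≫ j)
  epi_comp : ∀ {A B D : C} (p : A ⟶ B) (q : B ⟶ D),
    AdmissibleEpi E p → AdmissibleEpi E q → AdmissibleEpi E (p ≫ q)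
  pushout : ∀ {A B X : C} (i : A ⟶ B) (t : A ⟶ X), AdmissibleMono E i →
    ∃ (P : C) (sB : B ⟶ P) (sX : X ⟶ P), IsPushout i t sB sX ∧ AdmissibleMono E sX
  pullback : ∀ {B X Y : C} (d : B ⟶ X) (t : Y ⟶ X), AdmissibleEpi E d →
    ∃ (P : C) (pB : P ⟶ B) (pY : P ⟶ Y), IsPullback pB pY d t ∧ AdmissibleEpi E pY

/-- The class of split short exact sequences: those isomorphic to
`A → A ⊞ B → B` with the canonical inclusion and projection. -/
def splitClass (C : Type u) [Category.{v} C] [Preadditive C] [HasBinaryBiproducts C] :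
    Set (ShortComplex C) :=
  { S | ∃ (A B : C), Nonempty (S ≅ ShortComplex.mk (biprod.inl : A ⟶ A ⊞ B)
      (biprod.snd : A ⊞ B ⟶ B) (by simp)) }


namespace IsExactStructure

variable {E : Set (ShortComplex C)}

lemma mem_of_admissibleMono (hE : IsExactStructure E) {S : ShortComplex C}
    (hS : Nonempty (IsColimit (CokernelCofork.ofπ S.g S.zero))) (hf : AdmissibleMono E S.f) :
    S ∈ E := by
  obtain ⟨Z, d, w, hT⟩ := hf
  obtain ⟨hd⟩ := (hE.kcp _ hT).isCokernel
  obtain ⟨hg⟩ := hS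
  refine hE.iso_closed _ _ hT ⟨ShortComplex.isoMk (Iso.refl _) (Iso.refl _)
    (hd.coconePointUniqueUpToIso hg) (by simp) ?_⟩
  simpa using (hd.comp_coconePointUniqueUpToIso_hom hg WalkingParallelPair.one).symm

lemma mem_of_admissibleEpi (hE : IsExactStructure E) {S : ShortComplex C}
    (hS : Nonempty (IsLimit (KernelFork.ofι S.f S.zero))) (hg : AdmissibleEpi E S.g) :
    S ∈ E := by
  obtain ⟨A, i, w, hT⟩ := hg
  obtain ⟨hi⟩ := (hE.kcp _ hT).isKernel
  obtain ⟨hf⟩ := hS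
  refine hE.iso_closed _ _ hT ⟨ShortComplex.isoMk (hi.conePointUniqueUpToIso hf)
    (Iso.refl _) (Iso.refl _) ?_ (by simp)⟩
  simpa using hi.conePointUniqueUpToIso_hom_comp hf WalkingParallelPair.zero

lemma admissibleMono_comp_iso (hE : IsExactStructure E) {A B B' : C} {i : A ⟶ B}
    (hi : AdmissibleMono E i) (e : B ≅ B') : AdmissibleMono E (i ≫ e.hom) := by
  obtain ⟨Z, d, w, hS⟩ := hi
  exact ⟨Z, e.inv ≫ d, by simpa using w, hE.iso_closed _ _ hS
    ⟨ShortComplex.isoMk (Iso.refl _) e (Iso.refl _) (by simp) (by simp)⟩⟩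

lemma admissibleEpi_iso_comp (hE : IsExactStructure E) {B B' Z : C} {d : B ⟶ Z}
    (hd : AdmissibleEpi E d) (e : B' ≅ B) : AdmissibleEpi E (e.hom ≫ d) := by
  obtain ⟨A, i, w, hS⟩ := hd
  exact ⟨A, i ≫ e.inv, by simpa using w, hE.iso_closed _ _ hS
    ⟨ShortComplex.isoMk (Iso.refl _) e.symm (Iso.refl _) (by simp) (by simp)⟩⟩

lemma admissibleMono_of_isPushout (hE : IsExactStructure E) {A B X P : C} {i : A ⟶ B}
    {t : A ⟶ X} {sB : B ⟶ P} {sX : X ⟶ P} (h : IsPushout i t sB sX)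
    (hi : AdmissibleMono E i) : AdmissibleMono E sX := by
  obtain ⟨P', sB', sX', h', hsX'⟩ := hE.pushout i t hi
  rw [← IsPushout.inr_isoIsPushout_hom _ _ h' h]
  exact hE.admissibleMono_comp_iso hsX' _

lemma admissibleEpi_of_isPullback (hE : IsExactStructure E) {B X Y P : C} {d : B ⟶ X}
    {t : Y ⟶ X} {pB : P ⟶ B} {pY : P ⟶ Y} (h : IsPullback pB pY d t)
    (hd : AdmissibleEpi E d) : AdmissibleEpi E pY := by
  obtain ⟨P', pB', pY', h', hpY'⟩ := hE.pullback d t hd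
  rw [← IsPullback.isoIsPullback_hom_snd _ _ h h']
  exact hE.admissibleEpi_iso_comp hpY' _

end IsExactStructure

section sInter

variable {𝒯 : Set (Set (ShortComplex C))}

lemma admissibleMono_sInter_iff (h𝒯 : ∀ E ∈ 𝒯, IsExactStructure E) (hne : 𝒯.Nonempty)
    {A B : C} (i : A ⟶ B) : AdmissibleMono (⋂₀ 𝒯) i ↔ ∀ E ∈ 𝒯, AdmissibleMono E i := by
  refine ⟨fun ⟨Z, d, w, hS⟩ E hE => ⟨Z, d, w, hS E hE⟩, fun hi => ?_⟩
  obtain ⟨E₀, hE₀⟩ := hne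
  obtain ⟨Z, d, w, hS⟩ := hi E₀ hE₀
  exact ⟨Z, d, w, fun E hE =>
    (h𝒯 E hE).mem_of_admissibleMono ((h𝒯 E₀ hE₀).kcp _ hS).isCokernel (hi E hE)⟩

lemma admissibleEpi_sInter_iff (h𝒯 : ∀ E ∈ 𝒯, IsExactStructure E) (hne : 𝒯.Nonempty)
    {B Z : C} (d : B ⟶ Z) : AdmissibleEpi (⋂₀ 𝒯) d ↔ ∀ E ∈ 𝒯, AdmissibleEpi E d := by
  refine ⟨fun ⟨A, i, w, hS⟩ E hE => ⟨A, i, w, hS E hE⟩, fun hd => ?_⟩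
  obtain ⟨E₀, hE₀⟩ := hne
  obtain ⟨A, i, w, hS⟩ := hd E₀ hE₀
  exact ⟨A, i, w, fun E hE =>
    (h𝒯 E hE).mem_of_admissibleEpi ((h𝒯 E₀ hE₀).kcp _ hS).isKernel (hd E hE)⟩

lemma isExactStructure_sInter (h𝒯 : ∀ E ∈ 𝒯, IsExactStructure E) (hne : 𝒯.Nonempty) :
    IsExactStructure (⋂₀ 𝒯) := by
  have mono_iff {A B : C} (i : A ⟶ B) := admissibleMono_sInter_iff h𝒯 hne i
  have epi_iff {B Z : C} (d : B ⟶ Z) := admissibleEpi_sInter_iff h𝒯 hne d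
  obtain ⟨E₀, hE₀⟩ := hne
  refine
    { kcp := fun S hS => (h𝒯 E₀ hE₀).kcp S (hS E₀ hE₀)
      iso_closed := fun S T hS e E hE => (h𝒯 E hE).iso_closed S T (hS E hE) e
      id_mono := fun A => (mono_iff _).2 fun E hE => (h𝒯 E hE).id_mono A
      id_epi := fun A => (epi_iff _).2 fun E hE => (h𝒯 E hE).id_epi A
      mono_comp := fun i j hi hj => (mono_iff _).2 fun E hE =>
        (h𝒯 E hE).mono_comp i j ((mono_iff i).1 hi E hE) ((mono_iff j).1 hj E hE)
      epi_comp := fun p q hp hq => (epi_iff _).2 fun E hE =>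
        (h𝒯 E hE).epi_comp p q ((epi_iff p).1 hp E hE) ((epi_iff q).1 hq E hE)
      pushout := fun i t hi => ?_
      pullback := fun d t hd => ?_ }
  · obtain ⟨P, sB, sX, h, -⟩ := (h𝒯 E₀ hE₀).pushout i t ((mono_iff i).1 hi E₀ hE₀)
    exact ⟨P, sB, sX, h, (mono_iff sX).2 fun E hE =>
      (h𝒯 E hE).admissibleMono_of_isPushout h ((mono_iff i).1 hi E hE)⟩
  · obtain ⟨P, pB, pY, h, -⟩ := (h𝒯 E₀ hE₀).pullback d t ((epi_iff d).1 hd E₀ hE₀)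
    exact ⟨P, pB, pY, h, (epi_iff pY).2 fun E hE =>
      (h𝒯 E hE).admissibleEpi_of_isPullback h ((epi_iff d).1 hd E hE)⟩

lemma IsExactStructure.inter {E F : Set (ShortComplex C)} (hE : IsExactStructure E)
    (hF : IsExactStructure F) : IsExactStructure (E ∩ F) :=
  Set.sInter_pair E F ▸ isExactStructure_sInter (by rintro G (rfl | rfl); exacts [hE, hF])
    ⟨E, Set.mem_insert _ _⟩

end sInter

namespace CategoryTheory.ShortComplex.Splitting

variable {S : ShortComplex C}

lemma isKernelCokernelPair [HasZeroObject C] (σ : S.Splitting) : IsKernelCokernelPair S :=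
  ⟨⟨σ.fIsKernel⟩, ⟨σ.gIsCokernel⟩⟩

variable [HasBinaryBiproducts C]

lemma isPushout (σ : S.Splitting) {X : C} (t : S.X₁ ⟶ X) :
    IsPushout S.f t (biprod.lift (σ.r ≫ t) S.g) biprod.inl := by
  have w : S.f ≫ biprod.lift (σ.r ≫ t) S.g = t ≫ biprod.inl := by ext <;> simp
  refine IsPushout.of_isColimit (PushoutCocone.IsColimit.mk w
    (fun c => biprod.desc c.inr (σ.s ≫ c.inl)) (fun c => ?_) (fun c => by simp)
    (fun c m hl hr => ?_))
  · calc biprod.lift (σ.r ≫ t) S.g ≫ biprod.desc c.inr (σ.s ≫ c.inl)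
        = σ.r ≫ S.f ≫ c.inl + S.g ≫ σ.s ≫ c.inl := by simp [c.condition]
      _ = c.inl := by rw [← Category.assoc, ← Category.assoc, ← Preadditive.add_comp, σ.id,
          Category.id_comp]
  · have hinr : σ.s ≫ biprod.lift (σ.r ≫ t) S.g = biprod.inr := by ext <;> simp
    ext
    · simpa using hr
    · simp [← hl, reassoc_of% hinr]

lemma isPullback (σ : S.Splitting) {Y : C} (t : Y ⟶ S.X₃) :
    IsPullback (biprod.desc (t ≫ σ.s) S.f) biprod.fst S.g t := by
  have w : biprod.desc (t ≫ σ.s) S.f ≫ S.g = biprod.fst ≫ t := by ext <;> simp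
  refine IsPullback.of_isLimit (PullbackCone.IsLimit.mk w
    (fun c => biprod.lift c.snd (c.fst ≫ σ.r)) (fun c => ?_) (fun c => by simp)
    (fun c m hl hr => ?_))
  · calc biprod.lift c.snd (c.fst ≫ σ.r) ≫ biprod.desc (t ≫ σ.s) S.f
        = c.fst ≫ S.g ≫ σ.s + c.fst ≫ σ.r ≫ S.f := by simp [c.condition_assoc]
      _ = c.fst := by rw [← Preadditive.comp_add, add_comm, σ.id, Category.comp_id]
  · have hinr : biprod.desc (t ≫ σ.s) S.f ≫ σ.r = biprod.snd := by ext <;> simp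
    ext
    · simpa using hr
    · simp [← hl, hinr]

end CategoryTheory.ShortComplex.Splitting

section splitClass

variable [HasBinaryBiproducts C]

lemma mem_splitClass_iff {S : ShortComplex C} : S ∈ splitClass C ↔ Nonempty S.Splitting := by
  constructor
  · rintro ⟨A, B, ⟨e⟩⟩
    exact ⟨(ShortComplex.Splitting.ofHasBinaryBiproduct A B).ofIso e.symm⟩
  · rintro ⟨σ⟩
    exact ⟨S.X₁, S.X₃, ⟨ShortComplex.isoMk (Iso.refl _) σ.isoBinaryBiproduct (Iso.refl _)
      (by ext <;> simp) (by simp)⟩⟩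

lemma admissibleMono_splitClass_inl (A B : C) :
    AdmissibleMono (splitClass C) (biprod.inl : A ⟶ A ⊞ B) :=
  ⟨B, biprod.snd, by simp, A, B, ⟨Iso.refl _⟩⟩

lemma admissibleEpi_splitClass_fst (A B : C) :
    AdmissibleEpi (splitClass C) (biprod.fst : A ⊞ B ⟶ A) :=
  ⟨B, biprod.inr, by simp, mem_splitClass_iff.2
    ⟨{ r := biprod.snd, s := biprod.inl, id := by rw [add_comm, biprod.total] }⟩⟩

lemma admissibleMono_splitClass_comp {A B D : C} {i : A ⟶ B} {j : B ⟶ D}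
    (hi : AdmissibleMono (splitClass C) i) (hj : AdmissibleMono (splitClass C) j) :
    AdmissibleMono (splitClass C) (i ≫ j) := by
  obtain ⟨Z, d, w, hS⟩ := hi
  obtain ⟨Z', d', w', hT⟩ := hj
  obtain ⟨σ⟩ := mem_splitClass_iff.1 hS
  obtain ⟨τ⟩ := mem_splitClass_iff.1 hT
  have hσ : σ.r ≫ i + d ≫ σ.s = 𝟙 B := σ.id
  have hτ : τ.r ≫ j + d' ≫ τ.s = 𝟙 D := τ.id
  refine ⟨Z ⊞ Z', biprod.lift (τ.r ≫ d) d', by ext <;> simp [τ.f_r_assoc, w, w'],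
    mem_splitClass_iff.2 ⟨
    { r := τ.r ≫ σ.r
      s := biprod.desc (σ.s ≫ j) τ.s
      f_r := by simp [τ.f_r_assoc, σ.f_r]
      s_g := by ext <;> simp [τ.f_r_assoc, σ.s_g, w', τ.s_r_assoc, τ.s_g]
      id := ?_ }⟩⟩
  calc (τ.r ≫ σ.r) ≫ i ≫ j + biprod.lift (τ.r ≫ d) d' ≫ biprod.desc (σ.s ≫ j) τ.s
      = τ.r ≫ (σ.r ≫ i + d ≫ σ.s) ≫ j + d' ≫ τ.s := by simp [add_assoc]
    _ = 𝟙 D := by rw [hσ, Category.id_comp, hτ]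

lemma admissibleEpi_splitClass_comp {A B D : C} {p : A ⟶ B} {q : B ⟶ D}
    (hp : AdmissibleEpi (splitClass C) p) (hq : AdmissibleEpi (splitClass C) q) :
    AdmissibleEpi (splitClass C) (p ≫ q) := by
  obtain ⟨K, i, w, hS⟩ := hp
  obtain ⟨K', i', w', hT⟩ := hq
  obtain ⟨σ⟩ := mem_splitClass_iff.1 hS
  obtain ⟨τ⟩ := mem_splitClass_iff.1 hT
  have hσ : σ.r ≫ i + p ≫ σ.s = 𝟙 A := σ.id
  have hτ : τ.r ≫ i' + q ≫ τ.s = 𝟙 B := τ.id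
  refine ⟨K ⊞ K', biprod.desc i (i' ≫ σ.s), by ext <;> simp [reassoc_of% w, σ.s_g_assoc, w'],
    mem_splitClass_iff.2 ⟨
    { r := biprod.lift σ.r (p ≫ τ.r)
      s := τ.s ≫ σ.s
      f_r := by ext <;> simp [reassoc_of% w, σ.f_r, σ.s_r, σ.s_g_assoc, τ.f_r]
      s_g := by simp [σ.s_g_assoc, τ.s_g]
      id := ?_ }⟩⟩
  calc biprod.lift σ.r (p ≫ τ.r) ≫ biprod.desc i (i' ≫ σ.s) + (p ≫ q) ≫ τ.s ≫ σ.s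
      = σ.r ≫ i + p ≫ (τ.r ≫ i' + q ≫ τ.s) ≫ σ.s := by simp [add_assoc]
    _ = 𝟙 A := by rw [hτ, Category.id_comp, hσ]

end splitClass

section splitExact

open ZeroObject

variable [HasZeroObject C] [HasBinaryBiproducts C]

lemma isExactStructure_splitClass : IsExactStructure (splitClass C) where
  kcp S hS := (mem_splitClass_iff.1 hS).some.isKernelCokernelPair
  iso_closed S T hS e := mem_splitClass_iff.2 ⟨(mem_splitClass_iff.1 hS).some.ofIso e.some⟩
  id_mono A := ⟨0, 0, comp_zero, mem_splitClass_iff.2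
    ⟨.ofIsIsoOfIsZero _ (by dsimp; infer_instance) (isZero_zero C)⟩⟩
  id_epi A := ⟨0, 0, zero_comp, mem_splitClass_iff.2
    ⟨.ofIsZeroOfIsIso _ (isZero_zero C) (by dsimp; infer_instance)⟩⟩
  mono_comp _ _ := admissibleMono_splitClass_comp
  epi_comp _ _ := admissibleEpi_splitClass_comp
  pushout i t := by
    rintro ⟨_, _, _, hS⟩
    exact ⟨_, _, _, (mem_splitClass_iff.1 hS).some.isPushout t,
      admissibleMono_splitClass_inl _ _⟩
  pullback d t := by
    rintro ⟨_, _, _, hS⟩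
    exact ⟨_, _, _, (mem_splitClass_iff.1 hS).some.isPullback t,
      admissibleEpi_splitClass_fst _ _⟩

lemma IsExactStructure.splitClass_subset {E : Set (ShortComplex C)} (hE : IsExactStructure E) :
    splitClass C ⊆ E := by
  rintro S ⟨A, B, ⟨e⟩⟩
  refine hE.iso_closed _ _ ?_ ⟨e.symm⟩
  have hA : AdmissibleEpi E (0 : A ⟶ 0) :=
    ⟨A, 𝟙 A, comp_zero, hE.mem_of_admissibleMono (S := ShortComplex.mk (𝟙 A) (0 : A ⟶ 0) _)
      ⟨(ShortComplex.Splitting.ofIsIsoOfIsZero _ (by dsimp; infer_instance)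
        (isZero_zero C)).gIsCokernel⟩ (hE.id_mono A)⟩
  have hsnd : AdmissibleEpi E (biprod.snd : A ⊞ B ⟶ B) :=
    hE.admissibleEpi_of_isPullback (IsPullback.of_has_biproduct A B) hA
  exact hE.mem_of_admissibleEpi ⟨(ShortComplex.Splitting.ofHasBinaryBiproduct A B).fIsKernel⟩ hsnd

end splitExact

/-- The poset of exact structures on an additive category, ordered by
containment, is a complete (hence bounded) lattice, with meet given by
intersection, bottom element the split exact structure and top element the
maximal exact structure. -/
theorem exactStructures_completeLattice (C : Type u) [Category.{v} C] [Preadditive C]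
    [HasZeroObject C] [HasBinaryBiproducts C]
    (Emax : Set (ShortComplex C)) (hmax : IsExactStructure Emax)
    (hmax' : ∀ E : Set (ShortComplex C), IsExactStructure E → E ⊆ Emax) :
    ∃ inst : CompleteLattice {E : Set (ShortComplex C) // IsExactStructure E},
      (∀ E F : {E : Set (ShortComplex C) // IsExactStructure E},
          inst.le E F ↔ E.1 ⊆ F.1) ∧
      (∀ E F : {E : Set (ShortComplex C) // IsExactStructure E},
          (inst.inf E F).1 = E.1 ∩ F.1) ∧
      (inst.bot.1 = splitClass C) ∧
      (inst.top.1 = Emax) := by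
  -- Intersecting inside `Emax` makes `Emax`, not the class of all complexes, the empty infimum.
  let _ : InfSet {E : Set (ShortComplex C) // IsExactStructure E} :=
    ⟨fun T => ⟨⋂₀ insert Emax (Subtype.val '' T), isExactStructure_sInter
      (by rintro E (rfl | ⟨F, -, rfl⟩); exacts [hmax, F.2]) ⟨Emax, Set.mem_insert _ _⟩⟩⟩
  let L : CompleteLattice {E : Set (ShortComplex C) // IsExactStructure E} :=
    completeLatticeOfInf _ fun T =>
      ⟨fun E hE => Set.sInter_subset_of_mem (Set.mem_insert_of_mem _ ⟨E, hE, rfl⟩),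
        fun F hF => Set.subset_sInter <| by
          rintro G (rfl | ⟨G, hG, rfl⟩); exacts [hmax' F.1 F.2, hF hG]⟩
  refine ⟨L, fun _ _ => Iff.rfl, fun E F => ?_, ?_, ?_⟩
  · have hle : Subtype.mk _ (E.2.inter F.2) ≤ E ⊓ F :=
      le_inf Set.inter_subset_left Set.inter_subset_right
    exact (Set.subset_inter (inf_le_left : E ⊓ F ≤ E) (inf_le_right : E ⊓ F ≤ F)).antisymm hle
  · exact Set.Subset.antisymm (bot_le (a := Subtype.mk _ isExactStructure_splitClass))
      (⊥ : {E : Set (ShortComplex C) // IsExactStructure E}).2.splitClass_subset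
  · exact Set.Subset.antisymm (hmax' _ (⊤ : {E : Set (ShortComplex C) // IsExactStructure E}).2)
      (le_top (a := Subtype.mk _ hmax))
end

section
/- The Gabriel-Roiter measure μ_ℰ satisfies axiom (GR3): for indecomposable objects X, Y with l_ℰ(X) ≥ l_ℰ(Y), if μ_ℰ(X') ⋘ μ_ℰ(Y) strictly for every proper indecomposable ℰ-subobject X' of X, then μ_ℰ(X) ⋘ μ_ℰ(Y) (possibly with equality). -/
open CategoryTheory CategoryTheory.Limits

universe v u

variable {C : Type u} [Category.{v} C] [Preadditive C]

/-- `X` is an `ℰ`-subobject of `Y`: there is an admissible monic `X ↣ Y`. -/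
def ESubobject (E : Set (ShortComplex C)) (X Y : C) : Prop :=
  ∃ i : X ⟶ Y, AdmissibleMono E i

/-- There is a chain `0 = X₀ ↣ X₁ ↣ ⋯ ↣ Xₙ = X` of admissible monics that are
not isomorphisms. -/
def HasChainOfLength (E : Set (ShortComplex C)) (X : C) (n : ℕ) : Prop :=
  ∃ (obj : Fin (n + 1) → C) (f : ∀ i : Fin n, obj i.castSucc ⟶ obj i.succ),
    IsZero (obj 0) ∧ obj (Fin.last n) = X ∧
    ∀ i : Fin n, AdmissibleMono E (f i) ∧ ¬ IsIso (f i)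

/-- The `ℰ`-length of `X`: the supremum of the lengths of chains of proper
admissible monics ending in `X`. -/
noncomputable def eLength (E : Set (ShortComplex C)) (X : C) : ℕ∞ :=
  sSup { n : ℕ∞ | ∃ m : ℕ, HasChainOfLength E X m ∧ n = (m : ℕ∞) }

/-- `X` is a proper `ℰ`-subobject of `Y`: there is an admissible monic `X ↣ Y`
that is not an isomorphism. -/
def ProperESub (E : Set (ShortComplex C)) (X Y : C) : Prop :=
  ∃ i : X ⟶ Y, AdmissibleMono E i ∧ ¬ IsIso i

/-- An object is indecomposable if it is nonzero and in any direct sum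
decomposition one of the summands is zero. -/
def Indecomposable' [HasBinaryBiproducts C] (X : C) : Prop :=
  ¬ IsZero X ∧ ∀ A B : C, Nonempty (X ≅ A ⊞ B) → IsZero A ∨ IsZero B

/-- The Gabriel-Roiter order `⋘` on finite sequences of natural numbers:
lexicographic with the order on `ℕ` reversed, where a prefix is smaller. -/
def grLE : List ℕ → List ℕ → Prop
  | [], _ => True
  | _ :: _, [] => False
  | a :: x, b :: y => b < a ∨ (a = b ∧ grLE x y)

/-- The set of length vectors `(l_ℰ(X₁), …, l_ℰ(Xₙ))` of chains
`X₁ ⊊_ℰ ⋯ ⊊_ℰ Xₙ = X` of indecomposable proper `ℰ`-subobjects ending in `X`. -/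
def grVectors [HasBinaryBiproducts C] (E : Set (ShortComplex C)) (X : C) :
    Set (List ℕ) :=
  { l | ∃ (n : ℕ) (obj : Fin (n + 1) → C),
      (∀ i, Indecomposable' (obj i)) ∧ obj (Fin.last n) = X ∧
      (∀ i : Fin n, ProperESub E (obj i.castSucc) (obj i.succ)) ∧
      l = List.ofFn (fun i : Fin (n + 1) => (eLength E (obj i)).toNat) }

/-- `μ` is a Gabriel-Roiter measure: it sends each indecomposable `X` to the
maximal length vector, in the Gabriel-Roiter order, over all chains of
indecomposable proper `ℰ`-subobjects ending in `X`. -/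
def IsGRMeasure [HasBinaryBiproducts C] (E : Set (ShortComplex C))
    (μ : C → List ℕ) : Prop :=
  ∀ X : C, Indecomposable' X →
    μ X ∈ grVectors E X ∧ ∀ v ∈ grVectors E X, grLE v (μ X)

/-!
Take a chain `X₁ ⊊ ⋯ ⊊ Xₙ = X` realising `μ(X)`. If `n = 1` then `μ(X) = (l(X))`. Otherwise
`μ(X) = v' ++ (l(X))` where `v'` is the length vector of the truncated chain ending in
`X' = Xₙ₋₁`, so `v' ⋘ μ(X') ⋘ μ(Y)` with `v' ≠ μ(Y)`. Since every entry of `μ(Y)` is at most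
`l(Y) ≤ l(X)`, appending `l(X)` to a vector strictly below `μ(Y)` keeps it below `μ(Y)`.
-/

lemma grLE_trans : ∀ {u v w : List ℕ}, grLE u v → grLE v w → grLE u w
  | [], _, _, _, _ => trivial
  | _ :: _, [], _, h1, _ => h1.elim
  | _ :: _, _ :: _, [], _, h2 => h2.elim
  | _ :: _, _ :: _, _ :: _, h1, h2 => by
    rcases h1 with h1 | ⟨rfl, h1⟩ <;> rcases h2 with h2 | ⟨rfl, h2⟩
    · exact Or.inl (h2.trans h1)
    · exact Or.inl h1
    · exact Or.inl h2
    · exact Or.inr ⟨rfl, grLE_trans h1 h2⟩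

lemma grLE_antisymm : ∀ {u v : List ℕ}, grLE u v → grLE v u → u = v
  | [], [], _, _ => rfl
  | [], _ :: _, _, h2 => h2.elim
  | _ :: _, [], h1, _ => h1.elim
  | _ :: _, _ :: _, h1, h2 => by
    rcases h1 with h1 | ⟨rfl, h1⟩ <;> rcases h2 with h2 | ⟨e, h2⟩
    · omega
    · omega
    · omega
    · rw [grLE_antisymm h1 h2]

lemma grLE_append_singleton {w : List ℕ} {a : ℕ} (hw : ∀ b ∈ w, b ≤ a) :
    ∀ {u : List ℕ}, grLE u w → u ≠ w → grLE (u ++ [a]) w := by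
  induction w with
  | nil =>
    rintro (_ | _) h hne
    · exact absurd rfl hne
    · exact h.elim
  | cons b w ih =>
    rintro (_ | ⟨c, u⟩) h hne
    · exact (hw b List.mem_cons_self).lt_or_eq.imp id fun hba => ⟨hba.symm, trivial⟩
    · rcases h with h | ⟨rfl, h⟩
      · exact Or.inl h
      · exact Or.inr ⟨rfl, ih (fun x hx => hw x (List.mem_cons_of_mem _ hx)) h
          (mt (congrArg (_ :: ·)) hne)⟩

section Chains

variable {E : Set (ShortComplex C)}

lemma hasChainOfLength_iff {X : C} {n : ℕ} :
    HasChainOfLength E X n ↔ ∃ obj : Fin (n + 1) → C, IsZero (obj 0) ∧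
      obj (Fin.last n) = X ∧ ∀ i : Fin n, ProperESub E (obj i.castSucc) (obj i.succ) := by
  constructor
  · rintro ⟨obj, f, h0, hX, hf⟩
    exact ⟨obj, h0, hX, fun i => ⟨f i, hf i⟩⟩
  · rintro ⟨obj, h0, hX, hstep⟩
    choose f hf using hstep
    exact ⟨obj, f, h0, hX, hf⟩

lemma HasChainOfLength.snoc {A B : C} {m : ℕ} (h : HasChainOfLength E A m)
    (hAB : ProperESub E A B) : HasChainOfLength E B (m + 1) := by
  obtain ⟨obj, h0, rfl, hstep⟩ := hasChainOfLength_iff.mp h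
  refine hasChainOfLength_iff.mpr ⟨Fin.snoc obj B, ?_, Fin.snoc_last .., fun j => ?_⟩
  · rw [← Fin.castSucc_zero, Fin.snoc_castSucc]
    exact h0
  · induction j using Fin.lastCases with
    | last => simpa [Fin.succ_last] using hAB
    | cast k =>
      rw [Fin.succ_castSucc, Fin.snoc_castSucc, Fin.snoc_castSucc]
      exact hstep k

lemma eLength_le_of_properESub {A B : C} (h : ProperESub E A B) :
    eLength E A ≤ eLength E B := by
  refine sSup_le ?_
  rintro _ ⟨m, hm, rfl⟩
  calc (m : ℕ∞) ≤ ((m + 1 : ℕ) : ℕ∞) := by exact_mod_cast m.le_succ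
    _ ≤ eLength E B := le_sSup ⟨m + 1, hm.snoc h, rfl⟩

variable [HasBinaryBiproducts C]

lemma ne_nil_of_mem_grVectors {X : C} {v : List ℕ} (hv : v ∈ grVectors E X) : v ≠ [] := by
  obtain ⟨n, obj, -, -, -, rfl⟩ := hv
  simp

lemma le_eLength_of_mem_grVectors {X : C} {v : List ℕ} (hv : v ∈ grVectors E X)
    {b : ℕ} (hb : b ∈ v) : (b : ℕ∞) ≤ eLength E X := by
  obtain ⟨n, obj, -, rfl, hstep, rfl⟩ := hv
  obtain ⟨i, rfl⟩ := List.mem_ofFn.mp hb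
  have hmono : Monotone (fun j => eLength E (obj j)) :=
    Fin.monotone_iff_le_succ.mpr fun j => eLength_le_of_properESub (hstep j)
  exact (ENat.natCast_toNat_le_self _).trans (hmono (Fin.le_last i))

lemma eq_singleton_or_exists_eq_append_of_mem_grVectors {X : C} {v : List ℕ}
    (hv : v ∈ grVectors E X) :
    v = [(eLength E X).toNat] ∨ ∃ X' v', Indecomposable' X' ∧ ProperESub E X' X ∧
      v' ∈ grVectors E X' ∧ v = v' ++ [(eLength E X).toNat] := by
  obtain ⟨n, obj, hind, rfl, hstep, rfl⟩ := hv
  cases n with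
  | zero => exact Or.inl rfl
  | succ m =>
    refine Or.inr ⟨obj (Fin.last m).castSucc, _, hind _, by simpa using hstep (Fin.last m),
      ⟨m, fun i => obj i.castSucc, fun i => hind _, rfl, fun i => ?_, rfl⟩,
      by rw [List.ofFn_succ', List.concat_eq_append]⟩
    simpa using hstep i.castSucc

end Chains

theorem grMeasure_GR3_general [HasBinaryBiproducts C]
    (E : Set (ShortComplex C))
    (hfin : ∀ W : C, eLength E W ≠ ⊤)
    (μ : C → List ℕ) (hμ : IsGRMeasure E μ)
    (X Y : C) (hX : Indecomposable' X) (hY : Indecomposable' Y)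
    (hlen : eLength E Y ≤ eLength E X)
    (h : ∀ X' : C, Indecomposable' X' → ProperESub E X' X →
      grLE (μ X') (μ Y) ∧ μ X' ≠ μ Y) :
    grLE (μ X) (μ Y) := by
  have hYmem := (hμ Y hY).1
  have hbound : ∀ b ∈ μ Y, b ≤ (eLength E X).toNat := fun b hb => by
    have := (le_eLength_of_mem_grVectors hYmem hb).trans hlen
    rwa [← ENat.natCast_toNat (hfin X), Nat.cast_le] at this
  rcases eq_singleton_or_exists_eq_append_of_mem_grVectors (hμ X hX).1 with
    hμX | ⟨X', v', hX', hX'X, hv', hμX⟩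
  · rw [hμX]
    exact grLE_append_singleton hbound (u := []) trivial (ne_nil_of_mem_grVectors hYmem).symm
  · obtain ⟨hX'Y, hne⟩ := h X' hX' hX'X
    have hv'X' : grLE v' (μ X') := (hμ X' hX').2 v' hv'
    rw [hμX]
    exact grLE_append_singleton hbound (grLE_trans hv'X' hX'Y)
      fun hv'Y => hne (grLE_antisymm hX'Y (hv'Y ▸ hv'X'))

/-- Axiom (GR₃) for the Gabriel-Roiter measure: for indecomposables `X`, `Y`
with `l_ℰ(X) ≥ l_ℰ(Y)`, if `μ_ℰ(X') ⋘ μ_ℰ(Y)` strictly for every proper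
indecomposable `ℰ`-subobject `X'` of `X`, then `μ_ℰ(X) ⋘ μ_ℰ(Y)`. -/
theorem grMeasure_GR3 [HasBinaryBiproducts C] [EssentiallySmall.{v} C]
    (E : Set (ShortComplex C)) (hE : IsExactStructure E)
    (hfin : ∀ W : C, eLength E W ≠ ⊤)
    (μ : C → List ℕ) (hμ : IsGRMeasure E μ)
    (X Y : C) (hX : Indecomposable' X) (hY : Indecomposable' Y)
    (hlen : eLength E Y ≤ eLength E X)
    (h : ∀ X' : C, Indecomposable' X' → ProperESub E X' X →
      grLE (μ X') (μ Y) ∧ μ X' ≠ μ Y) :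
    grLE (μ X) (μ Y) :=
  grMeasure_GR3_general E hfin μ hμ X Y hX hY hlen h
end
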